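/- Let G be a graph that is \widehat{P}_3-free and K_4-free, in which every edge lies in at least one triangle. Then every triangle block of G is a book B_s (s triangles all sharing one common edge) for some s \ge 1. Consequently, t(G) < e(G)/2. -/

import Mathlib

/-!
A triangle `abc` of a `K₄`-free, `\widehat{P}_3`-free graph cannot have second triangles on two
of its edges, say `abx` and `acy`: if `x = y` then `abcx` is a `K₄`, otherwise `x b c y` is a path
in the neighbourhood of `a`. So every triangle has an edge `uv` such that its other edges `uw`,
`vw` lie in no other triangle. Then any triangle through `uw'`, for a common neighbour `w'` of
`u` and `v`, is `uvw'` (otherwise `uv` and `uw'` would both lie in two triangles), so `uv`,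
`uw'`, `vw'` form a set closed under sharing a triangle: the block of `uv` is the book with spine
`uv`. Choosing such a labelling of every triangle, its two pages `uw`, `vw` are edges in no other
triangle, so the pages of all triangles are `2 t(G)` distinct edges, none of which is the spine
of a fixed triangle; hence `2 t(G) + 1 ≤ e(G)`.
-/

open SimpleGraph

/-- `G` contains a copy of `H` (a subgraph isomorphic to `H`). -/
def containsCopy {W V : Type*} (H : SimpleGraph W) (G : SimpleGraph V) : Prop :=
  ∃ f : H →g G, Function.Injective f

/-- The number of triangles of `G`. -/
noncomputable def triCount {V : Type*} (G : SimpleGraph V) : ℕ :=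
  {s : Finset V | G.IsNClique 3 s}.ncard

/-- The number of edges of `G`. -/
noncomputable def edgeCount {V : Type*} (G : SimpleGraph V) : ℕ :=
  G.edgeSet.ncard

/-- The suspension `K_1 ∨ H` of a graph `H`: a new vertex (`none`) joined to all
vertices of `H`. -/
def susp {W : Type*} (H : SimpleGraph W) : SimpleGraph (Option W) where
  Adj a b :=
    match a, b with
    | some x, some y => H.Adj x y
    | some _, none => True
    | none, some _ => True
    | none, none => False
  symm := ⟨by
    rintro (_ | x) (_ | y) h
    · exact h
    · trivial
    · trivial
    · exact h.symm⟩
  loopless := ⟨by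
    rintro (_ | x) h
    · exact h
    · exact H.loopless.irrefl x h⟩

/-- The Turán number: maximum number of edges of an `H`-free graph on `n` vertices. -/
noncomputable def exNum (n : ℕ) {W : Type*} (H : SimpleGraph W) : ℕ :=
  sSup {m | ∃ G : SimpleGraph (Fin n), ¬ containsCopy H G ∧ edgeCount G = m}

/-- The codegree of the pair `a, b`: number of common neighbours. -/
noncomputable def codeg {V : Type*} (G : SimpleGraph V) (a b : V) : ℕ :=
  (G.neighborSet a ∩ G.neighborSet b).ncard

/-- Two edges lie in a common triangle of `G`. -/
def triShare {V : Type*} (G : SimpleGraph V) (e e' : Sym2 V) : Prop :=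
  ∃ t : Finset V, G.IsNClique 3 t ∧
    (∃ x ∈ t, ∃ y ∈ t, x ≠ y ∧ e = s(x, y)) ∧
    (∃ x ∈ t, ∃ y ∈ t, x ≠ y ∧ e' = s(x, y))

namespace SimpleGraph

variable {V W : Type*} {G : SimpleGraph V}

theorem cliqueFree_of_not_containsCopy_top {n : ℕ}
    (h : ¬ containsCopy (⊤ : SimpleGraph (Fin n)) G) : G.CliqueFree n :=
  cliqueFree_iff.2 ⟨fun c => h ⟨c.toHom, c.injective⟩⟩

theorem containsCopy_susp {H : SimpleGraph W} {f : W → V} (hf : Function.Injective f)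
    (hadj : ∀ ⦃x y⦄, H.Adj x y → G.Adj (f x) (f y)) {a : V} (ha : ∀ x, G.Adj a (f x)) :
    containsCopy (susp H) G := by
  refine ⟨⟨fun o => o.elim a f, ?_⟩, ?_⟩
  · rintro (_ | x) (_ | y) h
    · exact h.elim
    · exact ha y
    · exact (ha x).symm
    · exact hadj h
  · rintro (_ | x) (_ | y) h
    · rfl
    · exact absurd h (ha y).ne
    · exact absurd h.symm (ha x).ne
    · exact congrArg some (hf h)

theorem containsCopy_susp_pathGraph_four {a p₀ p₁ p₂ p₃ : V} (h₀ : G.Adj a p₀)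
    (h₁ : G.Adj a p₁) (h₂ : G.Adj a p₂) (h₃ : G.Adj a p₃) (h₀₁ : G.Adj p₀ p₁)
    (h₁₂ : G.Adj p₁ p₂) (h₂₃ : G.Adj p₂ p₃) (h₀₂ : p₀ ≠ p₂) (h₀₃ : p₀ ≠ p₃) (h₁₃ : p₁ ≠ p₃) :
    containsCopy (susp (pathGraph 4)) G := by
  refine containsCopy_susp (f := ![p₀, p₁, p₂, p₃]) (a := a) ?_ ?_ ?_
  · have := h₀₁.ne; have := h₁₂.ne; have := h₂₃.ne
    intro i j hij
    fin_cases i <;> fin_cases j <;> simp_all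
  · intro i j hij
    rw [pathGraph_adj] at hij
    fin_cases i <;> fin_cases j <;> simp_all [adj_comm]
  · intro i
    fin_cases i <;> assumption

theorem subsingleton_commonNeighbors_or (hP3 : ¬ containsCopy (susp (pathGraph 4)) G)
    (hK4 : G.CliqueFree 4) {a b c : V} (hab : G.Adj a b) (hac : G.Adj a c) (hbc : G.Adj b c) :
    (G.commonNeighbors a b).Subsingleton ∨ (G.commonNeighbors a c).Subsingleton := by
  classical
  by_contra! h
  obtain ⟨x, ⟨hax, hbx⟩, hxc⟩ := h.1.exists_ne c
  obtain ⟨y, ⟨hay, hcy⟩, hyb⟩ := h.2.exists_ne b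
  by_cases hxy : x = y
  · subst hxy
    refine hK4 (insert a {b, c, x}) ((is3Clique_triple_iff.2 ⟨hbc, hbx, hcy⟩).insert ?_)
    simp only [Finset.mem_insert, Finset.mem_singleton]
    rintro _ (rfl | rfl | rfl) <;> assumption
  · exact hP3 (containsCopy_susp_pathGraph_four hax hab hac hay hbx.symm hbc hcy hxc hxy hyb.symm)

theorem IsNClique.exists_eq_triple [DecidableEq V] {t : Finset V} (ht : G.IsNClique 3 t)
    {x y : V} (hx : x ∈ t) (hy : y ∈ t) (hxy : x ≠ y) :
    ∃ z ∈ G.commonNeighbors x y, t = {x, y, z} := by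
  have hyx : y ∈ t.erase x := Finset.mem_erase.2 ⟨hxy.symm, hy⟩
  obtain ⟨z, hz⟩ := Finset.card_eq_one.1 (show ((t.erase x).erase y).card = 1 by
    simp [Finset.card_erase_of_mem, hx, hyx, ht.card_eq])
  have hzt : z ∈ (t.erase x).erase y := hz ▸ Finset.mem_singleton_self z
  simp only [Finset.mem_erase] at hzt
  refine ⟨z, ⟨ht.1 hx hzt.2.2 (Ne.symm hzt.2.1), ht.1 hy hzt.2.2 (Ne.symm hzt.1)⟩, ?_⟩
  rw [← hz, Finset.insert_erase hyx, Finset.insert_erase hx]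

theorem IsNClique.eq_of_subsingleton_commonNeighbors [DecidableEq V] {t t' : Finset V}
    (ht : G.IsNClique 3 t) (ht' : G.IsNClique 3 t') {x y : V} (hxy : x ≠ y)
    (hs : (G.commonNeighbors x y).Subsingleton) (he : s(x, y) ∈ t.sym2)
    (he' : s(x, y) ∈ t'.sym2) : t = t' := by
  rw [Finset.mk_mem_sym2_iff] at he he'
  obtain ⟨z, hz, rfl⟩ := ht.exists_eq_triple he.1 he.2 hxy
  obtain ⟨z', hz', rfl⟩ := ht'.exists_eq_triple he'.1 he'.2 hxy
  rw [hs hz hz']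

/-- `(G.commonNeighbors u w).Subsingleton` says that `uw` lies in no triangle other than `uvw`. -/
structure IsSpineTriangle (G : SimpleGraph V) (u v w : V) : Prop where
  adj_uv : G.Adj u v
  adj_uw : G.Adj u w
  adj_vw : G.Adj v w
  subsingleton_uw : (G.commonNeighbors u w).Subsingleton
  subsingleton_vw : (G.commonNeighbors v w).Subsingleton

theorem IsSpineTriangle.swap {u v w : V} (h : IsSpineTriangle G u v w) :
    IsSpineTriangle G v u w :=
  ⟨h.adj_uv.symm, h.adj_vw, h.adj_uw, h.subsingleton_vw, h.subsingleton_uw⟩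

theorem exists_isSpineTriangle [DecidableEq V] (hP3 : ¬ containsCopy (susp (pathGraph 4)) G)
    (hK4 : G.CliqueFree 4) {t : Finset V} (ht : G.IsNClique 3 t) :
    ∃ u v w, t = {u, v, w} ∧ IsSpineTriangle G u v w := by
  obtain ⟨a, b, c, hab, hac, hbc, rfl⟩ := is3Clique_iff.1 ht
  have hca := subsingleton_commonNeighbors_or hP3 hK4 hac.symm hbc.symm hab
  rw [commonNeighbors_symm G c a] at hca
  by_cases hab' : (G.commonNeighbors a b).Subsingleton
  · by_cases hac' : (G.commonNeighbors a c).Subsingleton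
    · refine ⟨b, c, a, by ext; simp; tauto, hbc, hab.symm, hac.symm, ?_, ?_⟩ <;>
        rwa [commonNeighbors_symm]
    · exact ⟨a, c, b, by ext; simp; tauto, hac, hab, hbc.symm, hab', hca.resolve_left hac'⟩
  · have hba := subsingleton_commonNeighbors_or hP3 hK4 hab.symm hbc hac
    rw [commonNeighbors_symm G b a] at hba
    exact ⟨a, b, c, rfl, hab, hac, hbc,
      (subsingleton_commonNeighbors_or hP3 hK4 hab hac hbc).resolve_left hab',
      hba.resolve_left hab'⟩

def bookEdges (u v : V) (S : Set V) : Set (Sym2 V) :=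
  {s(u, v)} ∪ ⋃ w ∈ S, {s(u, w), s(v, w)}

theorem mem_bookEdges {u v : V} {S : Set V} {e : Sym2 V} :
    e ∈ bookEdges u v S ↔ e = s(u, v) ∨ ∃ w ∈ S, e = s(u, w) ∨ e = s(v, w) := by
  simp [bookEdges]

theorem mk_mem_bookEdges [DecidableEq V] {u v w x y : V} {S : Set V} (hw : w ∈ S)
    (hx : x ∈ ({u, v, w} : Finset V)) (hy : y ∈ ({u, v, w} : Finset V)) (hxy : x ≠ y) :
    s(x, y) ∈ bookEdges u v S := by
  simp only [Finset.mem_insert, Finset.mem_singleton] at hx hy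
  rw [mem_bookEdges]
  rcases hx with rfl | rfl | rfl <;> rcases hy with rfl | rfl | rfl
  all_goals first
    | exact absurd rfl hxy
    | exact Or.inl rfl
    | exact Or.inl Sym2.eq_swap
    | exact Or.inr ⟨_, hw, Or.inl rfl⟩
    | exact Or.inr ⟨_, hw, Or.inl Sym2.eq_swap⟩
    | exact Or.inr ⟨_, hw, Or.inr rfl⟩
    | exact Or.inr ⟨_, hw, Or.inr Sym2.eq_swap⟩

def triangleBlock (G : SimpleGraph V) (e : Sym2 V) : Set (Sym2 V) :=
  {e' | e' ∈ G.edgeSet ∧ Relation.ReflTransGen (triShare G) e e'}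

theorem triangleBlock_eq_of_triShare {e e' : Sym2 V} (h : triShare G e e') :
    triangleBlock G e = triangleBlock G e' := by
  obtain ⟨t, ht, he, he'⟩ := h
  ext g
  exact ⟨fun ⟨hg, hr⟩ => ⟨hg, (Relation.ReflTransGen.single ⟨t, ht, he', he⟩).trans hr⟩,
    fun ⟨hg, hr⟩ => ⟨hg, (Relation.ReflTransGen.single ⟨t, ht, he, he'⟩).trans hr⟩⟩

namespace IsSpineTriangle

variable {u v w : V}

theorem eq_of_mem_commonNeighbors (hP3 : ¬ containsCopy (susp (pathGraph 4)) G)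
    (hK4 : G.CliqueFree 4) (h : IsSpineTriangle G u v w) {w' x : V}
    (hw' : w' ∈ G.commonNeighbors u v) (hx : x ∈ G.commonNeighbors u w') : x = v := by
  have hv : v ∈ G.commonNeighbors u w' := ⟨h.adj_uv, hw'.2.symm⟩
  by_cases hww' : w = w'
  · subst hww'
    exact h.subsingleton_uw hx hv
  · have hnt : (G.commonNeighbors u v).Nontrivial := ⟨w, ⟨h.adj_uw, h.adj_vw⟩, w', hw', hww'⟩
    exact ((subsingleton_commonNeighbors_or hP3 hK4 h.adj_uv hw'.1 hw'.2).resolve_left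
      hnt.not_subsingleton) hx hv

theorem exists_eq_of_mem_bookEdges [DecidableEq V] (hP3 : ¬ containsCopy (susp (pathGraph 4)) G)
    (hK4 : G.CliqueFree 4) (h : IsSpineTriangle G u v w) {t : Finset V} (ht : G.IsNClique 3 t)
    {e : Sym2 V} (he : e ∈ t.sym2) (hb : e ∈ bookEdges u v (G.commonNeighbors u v)) :
    ∃ w' ∈ G.commonNeighbors u v, t = {u, v, w'} := by
  rcases mem_bookEdges.1 hb with rfl | ⟨w', hw', rfl | rfl⟩ <;>
    rw [Finset.mk_mem_sym2_iff] at he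
  · obtain ⟨z, hz, rfl⟩ := ht.exists_eq_triple he.1 he.2 h.adj_uv.ne
    exact ⟨z, hz, rfl⟩
  · obtain ⟨z, hz, rfl⟩ := ht.exists_eq_triple he.1 he.2 hw'.1.ne
    rw [h.eq_of_mem_commonNeighbors hP3 hK4 hw' hz, Finset.pair_comm]
    exact ⟨w', hw', rfl⟩
  · obtain ⟨z, hz, rfl⟩ := ht.exists_eq_triple he.1 he.2 hw'.2.ne
    rw [h.swap.eq_of_mem_commonNeighbors hP3 hK4 (commonNeighbors_symm G u v ▸ hw') hz,
      Finset.pair_comm, Finset.insert_comm]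
    exact ⟨w', hw', rfl⟩

theorem triangleBlock_eq_bookEdges (hP3 : ¬ containsCopy (susp (pathGraph 4)) G)
    (hK4 : G.CliqueFree 4) (h : IsSpineTriangle G u v w) :
    triangleBlock G s(u, v) = bookEdges u v (G.commonNeighbors u v) := by
  classical
  refine subset_antisymm ?_ ?_
  · rintro g ⟨-, hg⟩
    induction hg with
    | refl => exact mem_bookEdges.2 (Or.inl rfl)
    | tail _ hshare ih =>
      obtain ⟨t, ht, ⟨x, hx, y, hy, -, rfl⟩, ⟨x', hx', y', hy', hxy', rfl⟩⟩ := hshare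
      obtain ⟨w', hw', rfl⟩ :=
        h.exists_eq_of_mem_bookEdges hP3 hK4 ht (Finset.mk_mem_sym2_iff.2 ⟨hx, hy⟩) ih
      exact mk_mem_bookEdges hw' hx' hy' hxy'
  · have hpage : ∀ w' ∈ G.commonNeighbors u v, ∀ x ∈ ({u, v, w'} : Finset V),
        ∀ y ∈ ({u, v, w'} : Finset V), x ≠ y → s(x, y) ∈ triangleBlock G s(u, v) := by
      intro w' hw' x hx y hy hxy
      have ht := is3Clique_triple_iff.2 ⟨h.adj_uv, hw'.1, hw'.2⟩
      exact ⟨ht.1 hx hy hxy, .single ⟨_, ht, ⟨u, by simp, v, by simp, h.adj_uv.ne, rfl⟩,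
        ⟨x, hx, y, hy, hxy, rfl⟩⟩⟩
    intro g hg
    rcases mem_bookEdges.1 hg with rfl | ⟨w', hw', rfl | rfl⟩
    · exact hpage w ⟨h.adj_uw, h.adj_vw⟩ u (by simp) v (by simp) h.adj_uv.ne
    · exact hpage w' hw' u (by simp) w' (by simp) hw'.1.ne
    · exact hpage w' hw' v (by simp) w' (by simp) hw'.2.ne

theorem eq_of_page_mem_sym2 [DecidableEq V] (h : IsSpineTriangle G u v w) {p : V}
    (hp : p = u ∨ p = v) {t : Finset V} (ht : G.IsNClique 3 t) (he : s(p, w) ∈ t.sym2) :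
    t = {u, v, w} := by
  have h3 := is3Clique_triple_iff.2 ⟨h.adj_uv, h.adj_uw, h.adj_vw⟩
  rcases hp with rfl | rfl
  · exact ht.eq_of_subsingleton_commonNeighbors h3 h.adj_uw.ne h.subsingleton_uw he (by simp)
  · exact ht.eq_of_subsingleton_commonNeighbors h3 h.adj_vw.ne h.subsingleton_vw he (by simp)

end IsSpineTriangle

theorem IsNClique.exists_triangleBlock_eq_bookEdges
    (hP3 : ¬ containsCopy (susp (pathGraph 4)) G) (hK4 : G.CliqueFree 4) {t : Finset V}
    (ht : G.IsNClique 3 t) {x y : V} (hx : x ∈ t) (hy : y ∈ t) (hxy : x ≠ y) :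
    ∃ u v w, IsSpineTriangle G u v w ∧
      triangleBlock G s(x, y) = bookEdges u v (G.commonNeighbors u v) := by
  classical
  obtain ⟨u, v, w, rfl, h⟩ := exists_isSpineTriangle hP3 hK4 ht
  refine ⟨u, v, w, h, ?_⟩
  rw [triangleBlock_eq_of_triShare
    ⟨_, ht, ⟨x, hx, y, hy, hxy, rfl⟩, ⟨u, by simp, v, by simp, h.adj_uv.ne, rfl⟩⟩]
  exact h.triangleBlock_eq_bookEdges hP3 hK4

theorem two_mul_triCount_lt_edgeCount [Fintype V]
    (hP3 : ¬ containsCopy (susp (pathGraph 4)) G) (hK4 : G.CliqueFree 4)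
    (hT : ∃ t : Finset V, G.IsNClique 3 t) : 2 * triCount G < edgeCount G := by
  classical
  obtain ⟨t₀, ht₀⟩ := hT
  obtain ⟨x, -⟩ := Finset.card_pos.1 (show 0 < t₀.card by rw [ht₀.card_eq]; norm_num)
  have : Nonempty V := ⟨x⟩
  choose! u v w hspine using fun t (ht : G.IsNClique 3 t) => exists_isSpineTriangle hP3 hK4 ht
  let page : Finset V × Bool → Sym2 V := fun p => s(cond p.2 (u p.1) (v p.1), w p.1)
  have hmem : ∀ t b, page (t, b) ∈ ({u t, v t, w t} : Finset V).sym2 := by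
    intro t b; cases b <;> simp [page]
  have hown : ∀ t, G.IsNClique 3 t → ∀ b {s}, G.IsNClique 3 s → page (t, b) ∈ s.sym2 → s = t :=
    fun t ht b _ hs he => ((hspine t ht).2.eq_of_page_mem_sym2 (by cases b <;> simp) hs he).trans
      (hspine t ht).1.symm
  have hclique : ∀ t, G.IsNClique 3 t → G.IsNClique 3 {u t, v t, w t} := fun t ht => by
    rw [← (hspine t ht).1]; exact ht
  have hσ : s(u t₀, v t₀) ∈ G.edgeSet := (hspine t₀ ht₀).2.adj_uv
  have hmaps : ∀ p ∈ {t | G.IsNClique 3 t} ×ˢ (Set.univ : Set Bool),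
      page p ∈ G.edgeSet \ {s(u t₀, v t₀)} := by
    rintro ⟨t, b⟩ ⟨ht, -⟩
    have hs := (hspine t ht).2
    refine ⟨by cases b <;> simp [page, hs.adj_uw, hs.adj_vw], fun heq => ?_⟩
    have ht₀t : t₀ = t :=
      (hspine t₀ ht₀).1.trans (hown t ht b (hclique t₀ ht₀) (by rw [heq]; simp))
    subst ht₀t
    have hw : w t₀ ∈ s(u t₀, v t₀) := (Set.mem_singleton_iff.1 heq) ▸ Sym2.mem_mk_right _ _
    rcases Sym2.mem_iff.1 hw with hwu | hwv
    · exact hs.adj_uw.ne hwu.symm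
    · exact hs.adj_vw.ne hwv.symm
  have hinj : Set.InjOn page ({t | G.IsNClique 3 t} ×ˢ (Set.univ : Set Bool)) := by
    rintro ⟨t, b⟩ ⟨ht, -⟩ ⟨t', b'⟩ ⟨ht', -⟩ heq
    have htt' : t' = t :=
      (hspine t' ht').1.trans (hown t ht b (hclique t' ht') (heq ▸ hmem t' b'))
    subst htt'
    have huv := (hspine t' ht').2.adj_uv.ne
    cases b <;> cases b'
    · rfl
    · exact absurd (Sym2.congr_left.1 heq) huv.symm
    · exact absurd (Sym2.congr_left.1 heq) huv
    · rfl
  have hle := Set.ncard_le_ncard_of_injOn page hmaps hinj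
  rw [Set.ncard_prod, Set.ncard_univ, Nat.card_eq_fintype_card, Fintype.card_bool,
    Set.ncard_sdiff_singleton_of_mem hσ] at hle
  have hpos : 0 < edgeCount G := (Set.ncard_pos (Set.toFinite _)).2 ⟨_, hσ⟩
  unfold triCount edgeCount at *
  omega

end SimpleGraph

/-- In a `\widehat{P}_3`-free, `K_4`-free graph in which every edge lies in a
triangle, every triangle block is a book `B_s` (`s ≥ 1`), and `t(G) < e(G)/2`. -/
theorem triangle_blocks_are_books {V : Type*} [Fintype V] (G : SimpleGraph V)
    (hP3 : ¬ containsCopy (susp (pathGraph 4)) G)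
    (hK4 : ¬ containsCopy (⊤ : SimpleGraph (Fin 4)) G)
    (hTri : ∀ e ∈ G.edgeSet, ∃ t : Finset V, G.IsNClique 3 t ∧
      ∃ x ∈ t, ∃ y ∈ t, x ≠ y ∧ e = s(x, y))
    (hNe : G.edgeSet.Nonempty) :
    (∀ e ∈ G.edgeSet, ∃ (u v : V) (S : Set V), G.Adj u v ∧ S.Nonempty ∧
        u ∉ S ∧ v ∉ S ∧ (∀ w ∈ S, G.Adj u w ∧ G.Adj v w) ∧
        {e' | e' ∈ G.edgeSet ∧ Relation.ReflTransGen (triShare G) e e'} =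
          {s(u, v)} ∪ ⋃ w ∈ S, {s(u, w), s(v, w)})
    ∧ 2 * triCount G < edgeCount G := by
  have hK4' := cliqueFree_of_not_containsCopy_top hK4
  refine ⟨fun e he => ?_, ?_⟩
  · obtain ⟨t, ht, x, hx, y, hy, hxy, rfl⟩ := hTri e he
    obtain ⟨u, v, w, h, hblock⟩ := ht.exists_triangleBlock_eq_bookEdges hP3 hK4' hx hy hxy
    exact ⟨u, v, G.commonNeighbors u v, h.adj_uv, ⟨w, h.adj_uw, h.adj_vw⟩,
      G.notMem_commonNeighbors_left u v, G.notMem_commonNeighbors_right u v,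
      fun _ hw => hw, hblock⟩
  · obtain ⟨e, he⟩ := hNe
    obtain ⟨t, ht, -⟩ := hTri e he
    exact two_mul_triCount_lt_edgeCount hP3 hK4' ⟨t, ht⟩
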